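/- arXiv:2306.08597 — 4 statements merged into one kernel-verified Lean document; each statement's English description precedes it below -/
import Mathlib

section
/- Let w ∈ S_n be a vexillary permutation and let (i_1, j_1), (i_2, j_2) ∈ D(w) be two linked squares with j_1 < j_2. Then: (1) i_1 ≤ i_2; and (2) if (i_1 − 1, j_1) ∉ D(w) and (i_2 − 1, j_2) ∉ D(w), then the j_1-th and j_2-th columns of D(w) agree above the (i_1 − 1)-th row, i.e., for every i ≤ i_1 − 1 one has (i, j_1) ∈ D(w) if and only if (i, j_2) ∈ D(w), and for such i in D(w), r_{D(w)}(i, j_1) = r_{D(w)}(i, j_2). -/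
open MvPolynomial

noncomputable section

/-- The defining recursion for the family of Grothendieck polynomials of permutations of `Fin n`
(written with 0-based positions): `G w₀ = x₀^{n-1} x₁^{n-2} ⋯`, and whenever `w j < w (j+1)`,
`(x_j - x_{j+1}) * G w = f - s_j · f` where `f = (1 - x_{j+1}) * G (w s_j)`. -/
def IsGrothendieck (n : ℕ) (G : Equiv.Perm (Fin n) → MvPolynomial (Fin n) ℤ) : Prop :=
  G Fin.revPerm = ∏ i : Fin n, X i ^ (n - 1 - (i : ℕ)) ∧
    ∀ (w : Equiv.Perm (Fin n)) (j j' : Fin n), (j : ℕ) + 1 = (j' : ℕ) → w j < w j' →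
      (X j - X j') * G w =
        (1 - X j') * G (w * Equiv.swap j j') -
          rename (⇑(Equiv.swap j j')) ((1 - X j') * G (w * Equiv.swap j j'))

/-- `w` is vexillary: it avoids the pattern 2143. -/
def Vexillary {n : ℕ} (w : Equiv.Perm (Fin n)) : Prop :=
  ¬∃ i j k l : Fin n, i < j ∧ j < k ∧ k < l ∧ w j < w i ∧ w i < w l ∧ w l < w k

/-- The Rothe diagram of `w`, as a set of (row, column) pairs with 1-based indexing:
`D(w) = {(i,j) : i < w⁻¹(j), j < w(i)}`. -/
def RotheDiagram (n : ℕ) (w : Equiv.Perm (Fin n)) : Finset (ℕ × ℕ) :=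
  Finset.image (fun p : Fin n × Fin n => ((p.1 : ℕ) + 1, (p.2 : ℕ) + 1))
    (Finset.univ.filter fun p : Fin n × Fin n => p.1 < w.symm p.2 ∧ p.2 < w p.1)

/-- The rank function of the Rothe diagram: `r(i,j) = #{k < i : w(k) < j}` (1-based). -/
def RotheRank (n : ℕ) (w : Equiv.Perm (Fin n)) (s : ℕ × ℕ) : ℤ :=
  ((Finset.univ.filter fun k : Fin n => (k : ℕ) + 1 < s.1 ∧ (w k : ℕ) + 1 < s.2).card : ℤ)

/-- Two squares are linked with respect to the Rothe rank function:
`i - i' = r(i,j) - r(i',j')`. -/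
def RLinked (n : ℕ) (w : Equiv.Perm (Fin n)) (s t : ℕ × ℕ) : Prop :=
  (s.1 : ℤ) - (t.1 : ℤ) = RotheRank n w s - RotheRank n w t

/-- A bubbling diagram: a diagram `D` of squares (row ≥ 1, 1-based), a nonnegative rank
function `r` and a set `F ⊆ D` of dead squares, such that every dead square has a live square
strictly above it in its column with the prescribed rank difference to the closest such, and
dead squares in the same row have distinct ranks. -/
structure BubblingDiagram where
  D : Finset (ℕ × ℕ)
  r : ℕ × ℕ → ℤ
  F : Finset (ℕ × ℕ)
  F_subset : F ⊆ D
  r_nonneg : ∀ s ∈ D, 0 ≤ r s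
  dead_live_above : ∀ s ∈ F, ∃ i' < s.1, (i', s.2) ∈ D ∧ (i', s.2) ∉ F
  dead_rank : ∀ s ∈ F, ∀ i' < s.1, (i', s.2) ∈ D → (i', s.2) ∉ F →
    (∀ i'', i' < i'' → i'' < s.1 → (i'', s.2) ∈ D → (i'', s.2) ∈ F) →
    r s - r (i', s.2) = (s.1 : ℤ) - (i' : ℤ)
  dead_distinct : ∀ s ∈ F, ∀ t ∈ F, s.1 = t.1 → s.2 ≠ t.2 → r s ≠ r t

/-- A bubbling move: a live square `(i,j)` with `(i-1,j)` empty moves up one row,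
its rank decreasing by one. -/
def IsBubbleMove (B C : BubblingDiagram) : Prop :=
  ∃ i j : ℕ, 2 ≤ i ∧ (i, j) ∈ B.D ∧ (i, j) ∉ B.F ∧ (i - 1, j) ∉ B.D ∧
    C.D = insert (i - 1, j) (B.D.erase (i, j)) ∧ C.F = B.F ∧
    C.r = Function.update B.r (i - 1, j) (B.r (i, j) - 1)

/-- A K-bubbling move: a live square `(i,j)` with `(i-1,j)` empty, and such that no dead square
in row `i` has the same rank as `(i,j)`, moves up one row (rank decreasing by one), leaving
behind a dead copy of itself. -/
def IsKBubbleMove (B C : BubblingDiagram) : Prop :=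
  ∃ i j : ℕ, 2 ≤ i ∧ (i, j) ∈ B.D ∧ (i, j) ∉ B.F ∧ (i - 1, j) ∉ B.D ∧
    (∀ k : ℕ, (i, k) ∈ B.F → B.r (i, k) ≠ B.r (i, j)) ∧
    C.D = insert (i - 1, j) B.D ∧ C.F = insert (i, j) B.F ∧
    C.r = Function.update B.r (i - 1, j) (B.r (i, j) - 1)

/-- `C ∈ BD(B)`: `C` is obtainable from `B` by finitely many bubbling and K-bubbling moves. -/
def InBD (B C : BubblingDiagram) : Prop :=
  Relation.ReflTransGen (fun P Q => IsBubbleMove P Q ∨ IsKBubbleMove P Q) B C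

/-- The Rothe bubbling diagram `𝒟(w) = (D(w), r_{D(w)}, ∅)`. -/
def RotheBD (n : ℕ) (w : Equiv.Perm (Fin n)) : BubblingDiagram where
  D := RotheDiagram n w
  r := RotheRank n w
  F := ∅
  F_subset := Finset.empty_subset _
  r_nonneg := fun _ _ => Int.natCast_nonneg _
  dead_live_above := by simp
  dead_rank := by simp
  dead_distinct := by simp

/-- The weight of a diagram: its `i`-th coordinate is the number of squares in row `i+1`
(1-based row `i+1` corresponds to `i : Fin n`). -/
def diagWt (n : ℕ) (D : Finset (ℕ × ℕ)) (i : Fin n) : ℕ :=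
  (D.filter fun s => s.1 = (i : ℕ) + 1).card

/-- Gale order on finite sets of naturals: same cardinality, and the `m`-th smallest element
of `R` is at most the `m`-th smallest element of `S`, for every `m`. -/
def galeLE (R S : Finset ℕ) : Prop :=
  R.card = S.card ∧ ∀ m < R.card, (R.sort (· ≤ ·)).getD m 0 ≤ (S.sort (· ≤ ·)).getD m 0

/-- Column `j` of a diagram: the set of rows of its squares in column `j`. -/
def diagCol (D : Finset (ℕ × ℕ)) (j : ℕ) : Finset ℕ :=
  (D.filter fun s => s.2 = j).image Prod.fst

/-- Columnwise Gale order on diagrams. -/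
def diagLE (C D : Finset (ℕ × ℕ)) : Prop := ∀ j : ℕ, galeLE (diagCol C j) (diagCol D j)

/-- The diagram lies in the grid `[n] × [n]` (1-based). -/
def InGrid (n : ℕ) (D : Finset (ℕ × ℕ)) : Prop :=
  ∀ s ∈ D, s.1 ∈ Finset.Icc 1 n ∧ s.2 ∈ Finset.Icc 1 n

/-- M-convexity of a set of lattice points. -/
def MConvex {m : ℕ} (S : Set (Fin m → ℤ)) : Prop :=
  ∀ x ∈ S, ∀ y ∈ S, ∀ i : Fin m, y i < x i →
    ∃ j : Fin m, x j < y j ∧ (x - Pi.single i 1 + Pi.single j 1) ∈ S ∧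
      (y - Pi.single j 1 + Pi.single i 1) ∈ S

open Classical in
/-- The rank function of the Schubert matroid `SM_n(I)`: the bases are the `B ⊆ [n]` with
`B ≤ I` in Gale order, and `rank J = max {#(J ∩ B) : B a basis}`. -/
def schubertRank (n : ℕ) (I J : Finset ℕ) : ℕ :=
  ((Finset.Icc 1 n).powerset.filter fun B => galeLE B I).sup fun B => (J ∩ B).card

/-- The Schubert matroid polytope `P(SM_n(I)) ⊆ ℝⁿ`: the convex hull of the 0/1 indicator
vectors of the bases of `SM_n(I)` (coordinate `i : Fin n` stands for the element `i+1`). -/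
def schubertPolytope (n : ℕ) (I : Finset ℕ) : Set (Fin n → ℝ) :=
  convexHull ℝ {v | ∃ B : Finset ℕ, B ⊆ Finset.Icc 1 n ∧ galeLE B I ∧
    v = fun i : Fin n => if (i : ℕ) + 1 ∈ B then (1 : ℝ) else 0}

/-- A Schubitope: a finite Minkowski sum of Schubert matroid polytopes of nonempty
subsets of `[n]`. -/
def IsSchubitope (n : ℕ) (P : Set (Fin n → ℝ)) : Prop :=
  ∃ (k : ℕ) (I : Fin k → Finset ℕ), (∀ j, (I j).Nonempty ∧ I j ⊆ Finset.Icc 1 n) ∧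
    P = {x | ∃ p : Fin k → Fin n → ℝ, (∀ j, p j ∈ schubertPolytope n (I j)) ∧ x = ∑ j, p j}

/-- A generalized permutahedron: the polytope cut out by a submodular function `z`
with `z(∅) = 0`. -/
def IsGenPermutahedron {m : ℕ} (P : Set (Fin m → ℝ)) : Prop :=
  ∃ z : Finset (Fin m) → ℝ, z ∅ = 0 ∧
    (∀ A B : Finset (Fin m), z (A ∪ B) + z (A ∩ B) ≤ z A + z B) ∧
    P = {t | (∀ A : Finset (Fin m), ∑ i ∈ A, t i ≤ z A) ∧ ∑ i, t i = z Finset.univ}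

/-- The padding sets `S^{(k,s)}`: `S^{(0,s)} = S` and `S^{(k,s)}` is obtained from
`S^{(k-1,s)}` by inserting the largest `i ∈ [1, s)` not already present (when one exists). -/
def pad (S : Finset ℕ) (s : ℕ) : ℕ → Finset ℕ
  | 0 => S
  | k + 1 =>
      if h : ((Finset.Ico 1 s).filter fun i => i ∉ pad S s k).Nonempty then
        insert (((Finset.Ico 1 s).filter fun i => i ∉ pad S s k).max' h) (pad S s k)
      else pad S s k

/-- `d = s - #{i ∈ S : i ≤ s}`. -/
def padDepth (S : Finset ℕ) (s : ℕ) : ℕ := s - (S.filter fun i => i ≤ s).card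

/-- The order `I ≺ J`: `max (I \ J) ≤ max (J \ I)` (with the convention `max ∅ = 0`). -/
def maxPrec (I J : Finset ℕ) : Prop := (I \ J).sup id ≤ (J \ I).sup id

/-- Rows of the live squares of column `j` of a bubbling diagram. -/
def liveCol (B : BubblingDiagram) (j : ℕ) : Finset ℕ :=
  ((B.D \ B.F).filter fun s => s.2 = j).image Prod.fst

/-- The row of the `a`-th highest live square of column `j` (`a` is 1-based; highest means
smallest row index). -/
def nthLiveRow (B : BubblingDiagram) (j a : ℕ) : ℕ :=
  ((liveCol B j).sort (· ≤ ·)).getD (a - 1) 0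

/-- The number of squares of `D` strictly below `s` in its column. -/
def belowCount (D : Finset (ℕ × ℕ)) (s : ℕ × ℕ) : ℕ :=
  (D.filter fun t => t.2 = s.2 ∧ s.1 < t.1).card

/-- The total order `≺` on the squares of a diagram: lower rows first; within a row, fewer
squares below first; ties broken by smaller column index. -/
def sqPrec (D : Finset (ℕ × ℕ)) (s t : ℕ × ℕ) : Prop :=
  t.1 < s.1 ∨ (s.1 = t.1 ∧ belowCount D s < belowCount D t) ∨
    (s.1 = t.1 ∧ belowCount D s = belowCount D t ∧ s.2 < t.2)

end

/-!
Write a square of `D(w)` as `(a + 1, b + 1)` with `a b : Fin n`. As `a < w⁻¹ b`, the dots of `w` in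
the `a` rows above it lie either left of column `b` (there are `r(a + 1, b + 1)` of them) or right
of it (`northeastCount w a b`), so two squares are linked iff their northeast counts agree.

If `a₂ < a₁`, the dot of row `a₂` lies right of `b₂ > b₁` and makes the count of the first square
strictly larger; hence `a₁ ≤ a₂`. For the second part, suppose a row `m < a₁` has its dot strictly
between the columns `b₁` and `b₂`. Equality of the counts then forces a dot right of `b₂` in some
row `k` with `a₁ ≤ k < a₂`. Since the square right above `(a₁, b₁)` is empty, the dot of row
`p = a₁ - 1` lies left of `b₁`, and rows `m < p < k < w⁻¹ b₂` form a `2143` pattern. So no dot of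
the rows above `a₁` lies between the two columns, which makes the columns agree there, ranks
included.
-/

open Finset

section
variable {n : ℕ} {w : Equiv.Perm (Fin n)}

theorem mem_rotheDiagram {i j : ℕ} :
    (i, j) ∈ RotheDiagram n w ↔
      ∃ a b : Fin n, (a : ℕ) + 1 = i ∧ (b : ℕ) + 1 = j ∧ a < w.symm b ∧ b < w a := by
  simp only [RotheDiagram, mem_image, mem_filter, mem_univ, true_and, Prod.mk.injEq,
    Prod.exists]
  grind

theorem mem_rotheDiagram_succ_succ {a b : Fin n} :
    ((a : ℕ) + 1, (b : ℕ) + 1) ∈ RotheDiagram n w ↔ a < w.symm b ∧ b < w a := by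
  rw [mem_rotheDiagram]
  constructor
  · rintro ⟨a', b', ha, hb, h⟩
    obtain rfl : a' = a := Fin.ext (by omega)
    obtain rfl : b' = b := Fin.ext (by omega)
    exact h
  · exact fun h => ⟨a, b, rfl, rfl, h⟩

theorem mem_rotheDiagram_iff_of_le {i : ℕ} {a b : Fin n} (hi : i ≤ a) (ha : a ≤ w.symm b) :
    (i, (b : ℕ) + 1) ∈ RotheDiagram n w ↔ ∃ c : Fin n, (c : ℕ) + 1 = i ∧ b < w c := by
  rw [mem_rotheDiagram]
  constructor
  · rintro ⟨c, b', hc, hb, -, hbc⟩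
    obtain rfl : b' = b := Fin.ext (by omega)
    exact ⟨c, hc, hbc⟩
  · rintro ⟨c, hc, hbc⟩
    exact ⟨c, b, hc, rfl, lt_of_lt_of_le (Fin.lt_def.2 (by omega)) ha, hbc⟩

theorem rotheRank_eq (i : ℕ) (b : Fin n) :
    RotheRank n w (i, (b : ℕ) + 1) = (#{k : Fin n | (k : ℕ) + 1 < i ∧ w k < b} : ℤ) := by
  simp only [RotheRank, Nat.add_lt_add_iff_right, Fin.val_fin_lt]

theorem rotheRank_succ_succ (a b : Fin n) :
    RotheRank n w ((a : ℕ) + 1, (b : ℕ) + 1) = (#{k : Fin n | k < a ∧ w k < b} : ℤ) := by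
  simp only [rotheRank_eq, add_lt_add_iff_right, Fin.val_fin_lt]

theorem apply_ne_of_lt_symm_apply {k b : Fin n} (h : k < w.symm b) : w k ≠ b :=
  fun hk => h.ne ((Equiv.eq_symm_apply w).2 hk)

variable (w) in
def northeastCount (a b : Fin n) : ℕ := #{k | k < a ∧ b < w k}

theorem card_filter_lt_add_northeastCount {a b : Fin n} (h : a < w.symm b) :
    #{k | k < a ∧ w k < b} + northeastCount w a b = a := by
  have hsplit : Iio a = filter (fun k => k < a ∧ w k < b) univ ∪
      filter (fun k => k < a ∧ b < w k) univ := by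
    ext k
    simp only [mem_Iio, mem_union, mem_filter, mem_univ, true_and]
    refine ⟨fun hk => ?_, by rintro (hk | hk) <;> exact hk.1⟩
    exact (apply_ne_of_lt_symm_apply (hk.trans h)).lt_or_gt.imp (⟨hk, ·⟩) (⟨hk, ·⟩)
  rw [northeastCount, ← card_union_of_disjoint, ← hsplit, Fin.card_Iio]
  exact disjoint_filter.2 fun k _ hk hk' => hk.2.asymm hk'.2

theorem northeastCount_eq_of_rLinked {a₁ b₁ a₂ b₂ : Fin n} (h₁ : a₁ < w.symm b₁)
    (h₂ : a₂ < w.symm b₂)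
    (hlink : RLinked n w ((a₁ : ℕ) + 1, (b₁ : ℕ) + 1) ((a₂ : ℕ) + 1, (b₂ : ℕ) + 1)) :
    northeastCount w a₁ b₁ = northeastCount w a₂ b₂ := by
  have e₁ := card_filter_lt_add_northeastCount h₁
  have e₂ := card_filter_lt_add_northeastCount h₂
  simp only [RLinked, rotheRank_succ_succ] at hlink
  omega

theorem northeastCount_lt_northeastCount {a a' b b' k : Fin n} (ha : a ≤ a') (hb : b' ≤ b)
    (hk : k < a') (hkb : b' < w k) (hk' : ¬(k < a ∧ b < w k)) :
    northeastCount w a b < northeastCount w a' b' := by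
  have hsub : filter (fun x => x < a ∧ b < w x) univ ⊆
      filter (fun x => x < a' ∧ b' < w x) univ :=
    monotone_filter_right _ fun x _ hx => ⟨hx.1.trans_le ha, hb.trans_lt hx.2⟩
  refine card_lt_card <| (ssubset_iff_of_subset hsub).2 ⟨k, ?_, ?_⟩
  · simpa using ⟨hk, hkb⟩
  · simpa using hk'

theorem Vexillary.lt_apply_of_lt_apply (hw : Vexillary w) {a₁ a₂ b₁ b₂ p m : Fin n}
    (hb : b₁ < b₂) (ha : a₁ ≤ a₂) (ha₂ : a₂ < w.symm b₂) (hp : (p : ℕ) + 1 = a₁)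
    (hwp : w p ≤ b₁) (hcount : northeastCount w a₁ b₁ = northeastCount w a₂ b₂)
    (hm : m < a₁) (hwm : b₁ < w m) :
    b₂ < w m := by
  by_contra! hwm₂
  have hlt : northeastCount w a₁ b₂ < northeastCount w a₂ b₂ :=
    hcount ▸ northeastCount_lt_northeastCount le_rfl hb.le hm hwm fun h => hwm₂.not_gt h.2
  obtain ⟨k, hk, hk'⟩ := exists_mem_notMem_of_card_lt_card hlt
  simp only [mem_filter, mem_univ, true_and, not_and, not_lt] at hk hk'
  have hmp : m < p := by
    have : (m : ℕ) ≠ p := fun h => hwp.not_gt (Fin.ext h ▸ hwm)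
    rw [Fin.lt_def] at hm ⊢
    omega
  have hpk : p < k := by
    have := Fin.le_def.1 (not_lt.1 fun h => (hk' h).not_gt hk.2)
    rw [Fin.lt_def]
    omega
  have hmb₂ : w m ≠ b₂ := apply_ne_of_lt_symm_apply (hm.trans_le ha |>.trans ha₂)
  refine hw ⟨m, p, k, w.symm b₂, hmp, hpk, hk.1.trans ha₂, hwp.trans_lt hwm, ?_, ?_⟩
  · rw [Equiv.apply_symm_apply]; exact lt_of_le_of_ne hwm₂ hmb₂
  · rw [Equiv.apply_symm_apply]; exact hk.2

theorem mem_rotheDiagram_iff_of_forall_lt {a b₁ b₂ : Fin n} (hb : b₁ < b₂)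
    (h₁ : a ≤ w.symm b₁) (h₂ : a ≤ w.symm b₂) (hgap : ∀ m < a, b₁ < w m → b₂ < w m)
    {i : ℕ} (hi : i ≤ a) :
    (i, (b₁ : ℕ) + 1) ∈ RotheDiagram n w ↔ (i, (b₂ : ℕ) + 1) ∈ RotheDiagram n w := by
  rw [mem_rotheDiagram_iff_of_le hi h₁, mem_rotheDiagram_iff_of_le hi h₂]
  refine exists_congr fun c => and_congr_right fun hc => ⟨hgap c ?_, hb.trans⟩
  rw [Fin.lt_def]
  omega

theorem rotheRank_eq_of_forall_lt {a b₁ b₂ : Fin n} (hb : b₁ < b₂)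
    (h₁ : a ≤ w.symm b₁) (hgap : ∀ m < a, b₁ < w m → b₂ < w m) {i : ℕ} (hi : i ≤ a) :
    RotheRank n w (i, (b₁ : ℕ) + 1) = RotheRank n w (i, (b₂ : ℕ) + 1) := by
  simp only [rotheRank_eq]
  congr 2
  refine filter_congr fun k _ => and_congr_right fun hk => ⟨(·.trans hb), fun hk₂ => ?_⟩
  have hka : k < a := by rw [Fin.lt_def]; omega
  exact (apply_ne_of_lt_symm_apply (hka.trans_le h₁)).lt_or_gt.resolve_right
    fun hgt => (hgap k hka hgt).not_gt hk₂

end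

theorem stmt_12 (n : ℕ) (w : Equiv.Perm (Fin n)) (hw : Vexillary w)
    (i1 j1 i2 j2 : ℕ) (h1 : (i1, j1) ∈ RotheDiagram n w) (h2 : (i2, j2) ∈ RotheDiagram n w)
    (hlink : RLinked n w (i1, j1) (i2, j2)) (hj : j1 < j2) :
    i1 ≤ i2 ∧
      ((i1 - 1, j1) ∉ RotheDiagram n w → (i2 - 1, j2) ∉ RotheDiagram n w →
        ∀ i ≤ i1 - 1,
          ((i, j1) ∈ RotheDiagram n w ↔ (i, j2) ∈ RotheDiagram n w) ∧
          ((i, j1) ∈ RotheDiagram n w →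
            RotheRank n w (i, j1) = RotheRank n w (i, j2))) := by
  obtain ⟨a₁, b₁, rfl, rfl, ha₁, hb₁⟩ := mem_rotheDiagram.1 h1
  obtain ⟨a₂, b₂, rfl, rfl, ha₂, hb₂⟩ := mem_rotheDiagram.1 h2
  have hb : b₁ < b₂ := by rw [Fin.lt_def]; omega
  have hcount := northeastCount_eq_of_rLinked ha₁ ha₂ hlink
  have ha : a₁ ≤ a₂ := not_lt.1 fun ha => hcount.not_gt <|
    northeastCount_lt_northeastCount ha.le hb.le ha (hb.trans hb₂) fun h => lt_irrefl _ h.1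
  refine ⟨by rw [Fin.le_def] at ha; omega, fun htop _ i hi => ?_⟩
  simp only [Nat.add_sub_cancel] at htop hi
  have hgap : ∀ m < a₁, b₁ < w m → b₂ < w m := by
    intro m hm hwm
    obtain ⟨p, hp⟩ : ∃ p : Fin n, (p : ℕ) + 1 = a₁ :=
      ⟨⟨a₁ - 1, by omega⟩, by rw [Fin.lt_def] at hm; simp only; omega⟩
    have hwp : w p ≤ b₁ := not_lt.1 fun h => htop <| hp ▸ mem_rotheDiagram_succ_succ.2
      ⟨lt_trans (by rw [Fin.lt_def]; omega) ha₁, h⟩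
    exact hw.lt_apply_of_lt_apply hb ha ha₂ hp hwp hcount hm hwm
  exact ⟨mem_rotheDiagram_iff_of_forall_lt hb ha₁.le (ha.trans ha₂.le) hgap hi,
    fun _ => rotheRank_eq_of_forall_lt hb ha₁.le hgap hi⟩
end

section
/- Let w ∈ S_n be a vexillary permutation, let (i, j_1), (i, j_2) ∈ D(w), and suppose that the square (i, j_1) has more squares of D(w) below it in its column than (i, j_2) does, i.e., #{i' > i : (i', j_1) ∈ D(w)} > #{i' > i : (i', j_2) ∈ D(w)}. Then for every i' > i, (i', j_2) ∈ D(w) implies (i', j_1) ∈ D(w). -/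
open MvPolynomial

/-!
The columns of the Rothe diagram of a vexillary permutation are totally ordered by inclusion:
if row `a` lies in column `c` but not in column `c' > c`, while row `b` lies in column `c'` but
not in column `c`, then `a < w⁻¹(c) < b < w⁻¹(c')` is an occurrence of `2143`. Hence the column
with more squares below row `i` contains the other one.
-/

section

variable {n : ℕ} {w : Equiv.Perm (Fin n)}

lemma mem_rotheDiagram_iff {a b : ℕ} :
    (a, b) ∈ RotheDiagram n w ↔
      ∃ x y : Fin n, (x : ℕ) + 1 = a ∧ (y : ℕ) + 1 = b ∧ x < w.symm y ∧ y < w x := by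
  simp only [RotheDiagram, Finset.mem_image, Finset.mem_filter, Finset.mem_univ, true_and,
    Prod.exists, Prod.mk.injEq]
  aesop

lemma succ_mem_rotheDiagram_iff {x y : Fin n} :
    ((x : ℕ) + 1, (y : ℕ) + 1) ∈ RotheDiagram n w ↔ x < w.symm y ∧ y < w x := by
  rw [mem_rotheDiagram_iff]
  constructor
  · rintro ⟨x', y', hx, hy, h⟩
    obtain rfl : x' = x := Fin.ext (by omega)
    obtain rfl : y' = y := Fin.ext (by omega)
    exact h
  · exact fun h => ⟨x, y, rfl, rfl, h⟩

lemma mem_diagCol {D : Finset (ℕ × ℕ)} {a j : ℕ} : a ∈ diagCol D j ↔ (a, j) ∈ D := by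
  simp [diagCol]

lemma belowCount_eq_card_filter_diagCol (D : Finset (ℕ × ℕ)) (s : ℕ × ℕ) :
    belowCount D s = ((diagCol D s.2).filter (s.1 < ·)).card := by
  rw [belowCount, diagCol, Finset.filter_image, Finset.card_image_of_injOn, Finset.filter_filter]
  intro t ht u hu htu
  simp only [Finset.coe_filter, Finset.mem_filter] at ht hu
  exact Prod.ext htu (ht.1.2.trans hu.1.2.symm)

lemma Vexillary.not_rothe_columns_crossing (hw : Vexillary w) {a b c c' : Fin n} (hcc' : c < c')
    (ha : a < w.symm c ∧ c < w a) (hb : b < w.symm c' ∧ c' < w b)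
    (ha' : ¬(a < w.symm c' ∧ c' < w a)) (hb' : ¬(b < w.symm c ∧ c < w b)) : False := by
  have hcb : c < w b := hcc'.trans hb.2
  have hpb : w.symm c < b :=
    (not_lt.1 fun h => hb' ⟨h, hcb⟩).lt_of_ne (by rintro rfl; simp at hcb)
  have haq : a < w.symm c' := ha.1.trans (hpb.trans hb.1)
  have hwa : w a < c' :=
    (not_lt.1 fun h => ha' ⟨haq, h⟩).lt_of_ne (by rintro rfl; simp at haq)
  exact hw ⟨a, w.symm c, b, w.symm c', ha.1, hpb, hb.1,
    by simpa using ha.2, by simpa using hwa, by simpa using hb.2⟩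

theorem Vexillary.diagCol_rotheDiagram_total (hw : Vexillary w) (j j' : ℕ) :
    diagCol (RotheDiagram n w) j ⊆ diagCol (RotheDiagram n w) j' ∨
      diagCol (RotheDiagram n w) j' ⊆ diagCol (RotheDiagram n w) j := by
  wlog hjj' : j < j' generalizing j j'
  · rcases (not_lt.1 hjj').eq_or_lt with rfl | hlt
    · exact Or.inl subset_rfl
    · exact (this j' j hlt).symm
  by_contra hcross
  simp only [not_or, Finset.not_subset, mem_diagCol] at hcross
  obtain ⟨⟨a, haj, haj'⟩, ⟨b, hbj', hbj⟩⟩ := hcross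
  obtain ⟨x, c, rfl, rfl, hxc⟩ := mem_rotheDiagram_iff.1 haj
  obtain ⟨y, c', rfl, rfl, hyc'⟩ := mem_rotheDiagram_iff.1 hbj'
  exact hw.not_rothe_columns_crossing (Fin.lt_def.2 (by omega)) hxc hyc'
    (mt succ_mem_rotheDiagram_iff.2 haj') (mt succ_mem_rotheDiagram_iff.2 hbj)

end

theorem stmt_14_general (n : ℕ) (w : Equiv.Perm (Fin n)) (hw : Vexillary w)
    (i j1 j2 : ℕ)
    (hcount : belowCount (RotheDiagram n w) (i, j2) <
      belowCount (RotheDiagram n w) (i, j1)) :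
    ∀ i' > i, (i', j2) ∈ RotheDiagram n w → (i', j1) ∈ RotheDiagram n w := by
  intro i' _ hi'
  rcases hw.diagCol_rotheDiagram_total j2 j1 with hsub | hsub
  · exact mem_diagCol.1 (hsub (mem_diagCol.2 hi'))
  · rw [belowCount_eq_card_filter_diagCol, belowCount_eq_card_filter_diagCol] at hcount
    exact absurd hcount (not_lt.2 (Finset.card_le_card (Finset.filter_subset_filter _ hsub)))

theorem stmt_14 (n : ℕ) (w : Equiv.Perm (Fin n)) (hw : Vexillary w)
    (i j1 j2 : ℕ) (h1 : (i, j1) ∈ RotheDiagram n w) (h2 : (i, j2) ∈ RotheDiagram n w)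
    (hcount : belowCount (RotheDiagram n w) (i, j2) <
      belowCount (RotheDiagram n w) (i, j1)) :
    ∀ i' > i, (i', j2) ∈ RotheDiagram n w → (i', j1) ∈ RotheDiagram n w :=
  stmt_14_general n w hw i j1 j2 hcount
end

section
/- Let 𝒟 = (D, r, F) be a bubbling diagram and let 𝒟' = (D', r', F') ∈ BD(𝒟). Suppose that column j of 𝒟' has at least a_j live squares and column k of 𝒟' has at least a_k live squares, and that the a_j-th highest live square of column j of 𝒟' is linked (with respect to r') to the a_k-th highest live square of column k of 𝒟'. Then columns j and k of 𝒟 have at least a_j and a_k live squares respectively, and the a_j-th highest live square of column j of 𝒟 is linked (with respect to r) to the a_k-th highest live square of column k of 𝒟. -/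
open MvPolynomial

/-! Bubbling and K-bubbling moves act in the same way on live squares: the live square `(i, j)`
is replaced by a live square in the empty cell `(i - 1, j)`, of rank one less. Such a move keeps
the order of the live squares of every column and the value `row - rank` of each of them. Two
squares are linked exactly when these values agree. -/

lemma strictMonoOn_swap_pred {s : Set ℕ} {i : ℕ} (hs : i - 1 ∉ s) :
    StrictMonoOn (Equiv.swap i (i - 1)) s := by
  intro x hx y hy hxy
  have hx' : x ≠ i - 1 := by rintro rfl; exact hs hx
  have hy' : y ≠ i - 1 := by rintro rfl; exact hs hy
  rcases eq_or_ne x i with rfl | hxi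
  · rw [Equiv.swap_apply_left, Equiv.swap_apply_of_ne_of_ne hxy.ne' hy']
    omega
  rcases eq_or_ne y i with rfl | hyi
  · rw [Equiv.swap_apply_left, Equiv.swap_apply_of_ne_of_ne hxi hx']
    omega
  rwa [Equiv.swap_apply_of_ne_of_ne hxi hx', Equiv.swap_apply_of_ne_of_ne hyi hy']

def liveProfile (B : BubblingDiagram) (c : ℕ) : List ℤ :=
  ((liveCol B c).sort (· ≤ ·)).map fun x : ℕ => (x : ℤ) - B.r (x, c)

/-- The effect on live squares and ranks shared by bubbling and K-bubbling moves at `(i, j)`. -/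
structure MovesLiveSquareUp (B C : BubblingDiagram) (i j : ℕ) : Prop where
  one_le : 1 ≤ i
  mem_D : (i, j) ∈ B.D
  notMem_F : (i, j) ∉ B.F
  pred_notMem_D : (i - 1, j) ∉ B.D
  live_iff : ∀ p, p ∈ C.D ∧ p ∉ C.F ↔ p = (i - 1, j) ∨ p ≠ (i, j) ∧ p ∈ B.D ∧ p ∉ B.F
  r_eq : C.r = Function.update B.r (i - 1, j) (B.r (i, j) - 1)

section

variable {B C : BubblingDiagram}

lemma mem_liveCol {c x : ℕ} : x ∈ liveCol B c ↔ (x, c) ∈ B.D ∧ (x, c) ∉ B.F := by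
  simp [liveCol]

lemma length_liveProfile (c : ℕ) : (liveProfile B c).length = (liveCol B c).card := by
  simp [liveProfile]

lemma liveProfile_getElem? {c a : ℕ} (ha : 1 ≤ a) (hac : a ≤ (liveCol B c).card) :
    (liveProfile B c)[a - 1]? = some ((nthLiveRow B c a : ℤ) - B.r (nthLiveRow B c a, c)) := by
  have hlt : a - 1 < ((liveCol B c).sort (· ≤ ·)).length := by
    rw [Finset.length_sort]; omega
  rw [liveProfile, nthLiveRow, List.getD_eq_getElem _ _ hlt, List.getElem?_map,
    List.getElem?_eq_getElem hlt, Option.map_some]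

lemma IsBubbleMove.movesLiveSquareUp (h : IsBubbleMove B C) :
    ∃ i j, MovesLiveSquareUp B C i j := by
  obtain ⟨i, j, hi, hD, hF, hup, hCD, hCF, hr⟩ := h
  have hupF : (i - 1, j) ∉ B.F := fun h => hup (B.F_subset h)
  refine ⟨i, j, ⟨by omega, hD, hF, hup, fun p => ?_, hr⟩⟩
  rw [hCD, hCF]
  by_cases hp : p = (i - 1, j)
  · subst hp; simp [hupF]
  · simp [hp, and_assoc]

lemma IsKBubbleMove.movesLiveSquareUp (h : IsKBubbleMove B C) :
    ∃ i j, MovesLiveSquareUp B C i j := by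
  obtain ⟨i, j, hi, hD, hF, hup, -, hCD, hCF, hr⟩ := h
  have hupF : (i - 1, j) ∉ B.F := fun h => hup (B.F_subset h)
  refine ⟨i, j, ⟨by omega, hD, hF, hup, fun p => ?_, hr⟩⟩
  rw [hCD, hCF]
  by_cases hp : p = (i - 1, j)
  · subst hp; simp [hupF, show i - 1 ≠ i by omega]
  · simp only [Finset.mem_insert, hp, false_or, not_or]; tauto

namespace MovesLiveSquareUp

variable {i j : ℕ}

lemma liveCol_self (h : MovesLiveSquareUp B C i j) :
    liveCol C j = (liveCol B j).map (Equiv.swap i (i - 1)).toEmbedding := by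
  ext x
  rw [Finset.mem_map_equiv, Equiv.symm_swap, mem_liveCol, mem_liveCol, h.live_iff]
  rcases eq_or_ne x (i - 1) with rfl | hx
  · simp [Equiv.swap_apply_right, h.mem_D, h.notMem_F]
  rcases eq_or_ne x i with rfl | hx'
  · simp [Equiv.swap_apply_left, h.pred_notMem_D, hx]
  simp [Equiv.swap_apply_of_ne_of_ne hx' hx, hx, hx']

lemma liveCol_of_ne (h : MovesLiveSquareUp B C i j) {c : ℕ} (hc : c ≠ j) :
    liveCol C c = liveCol B c := by
  ext x
  simp [mem_liveCol, h.live_iff, hc]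

lemma liveProfile_eq (h : MovesLiveSquareUp B C i j) (c : ℕ) :
    liveProfile C c = liveProfile B c := by
  rcases eq_or_ne c j with rfl | hc
  · have hmono : StrictMonoOn (Equiv.swap i (i - 1)) (liveCol B c : Set ℕ) :=
      strictMonoOn_swap_pred fun hmem => h.pred_notMem_D (mem_liveCol.mp hmem).1
    rw [liveProfile, liveProfile, h.liveCol_self, ← hmono.map_finsetSort, List.map_map]
    refine List.map_congr_left fun x hx => ?_
    rcases eq_or_ne x i with rfl | hxi
    · rw [Function.comp_apply, Equiv.coe_toEmbedding, Equiv.swap_apply_left, h.r_eq,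
        Function.update_self, Nat.cast_pred h.one_le]
      ring
    · have hx' : (x, c) ≠ (i - 1, c) := fun hxc =>
        h.pred_notMem_D (hxc ▸ (mem_liveCol.mp (Finset.mem_sort _ |>.mp hx)).1)
      rw [Function.comp_apply, Equiv.coe_toEmbedding,
        Equiv.swap_apply_of_ne_of_ne hxi (by simpa using hx'), h.r_eq, Function.update_of_ne hx']
  · rw [liveProfile, liveProfile, h.liveCol_of_ne hc]
    refine List.map_congr_left fun x _ => ?_
    rw [h.r_eq, Function.update_of_ne (by simp [hc])]

end MovesLiveSquareUp

namespace InBD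

lemma liveProfile_eq (h : InBD B C) (c : ℕ) : liveProfile C c = liveProfile B c := by
  induction h with
  | refl => rfl
  | tail _ hmove ih =>
    obtain ⟨i, j, hij⟩ :=
      hmove.elim IsBubbleMove.movesLiveSquareUp IsKBubbleMove.movesLiveSquareUp
    exact (hij.liveProfile_eq c).trans ih

lemma card_liveCol_eq (h : InBD B C) (c : ℕ) : (liveCol C c).card = (liveCol B c).card := by
  rw [← length_liveProfile, h.liveProfile_eq, length_liveProfile]

lemma nthLiveRow_sub_r_eq (h : InBD B C) {c a : ℕ} (ha : 1 ≤ a)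
    (hac : a ≤ (liveCol C c).card) :
    (nthLiveRow C c a : ℤ) - C.r (nthLiveRow C c a, c) =
      (nthLiveRow B c a : ℤ) - B.r (nthLiveRow B c a, c) := by
  have hac' := h.card_liveCol_eq c ▸ hac
  apply Option.some_injective
  rw [← liveProfile_getElem? ha hac, ← liveProfile_getElem? ha hac', h.liveProfile_eq]

end InBD

end

theorem stmt_16 (B B' : BubblingDiagram) (h : InBD B B') (j k aj ak : ℕ)
    (haj : 1 ≤ aj) (hak : 1 ≤ ak)
    (hj' : aj ≤ (liveCol B' j).card) (hk' : ak ≤ (liveCol B' k).card)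
    (hlink : (nthLiveRow B' j aj : ℤ) - (nthLiveRow B' k ak : ℤ) =
      B'.r (nthLiveRow B' j aj, j) - B'.r (nthLiveRow B' k ak, k)) :
    aj ≤ (liveCol B j).card ∧ ak ≤ (liveCol B k).card ∧
      (nthLiveRow B j aj : ℤ) - (nthLiveRow B k ak : ℤ) =
        B.r (nthLiveRow B j aj, j) - B.r (nthLiveRow B k ak, k) := by
  have hj := h.nthLiveRow_sub_r_eq haj hj'
  have hk := h.nthLiveRow_sub_r_eq hak hk'
  rw [h.card_liveCol_eq] at hj' hk'
  exact ⟨hj', hk', by linarith⟩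
end

section
/- Let w = 14253 ∈ S_5 (a vexillary permutation with ℓ(w) = 3). Then the Newton polytope of the degree-4 homogeneous component G_w^{(4)} of the Grothendieck polynomial G_w, i.e., the convex hull in ℝ^5 of supp(G_w^{(4)}), is not a Schubitope: there is no finite list I_1, …, I_k of nonempty subsets of [5] with Newton(G_w^{(4)}) = P(SM_5(I_1)) + … + P(SM_5(I_k)). -/
open MvPolynomial

/-- The permutation `w = 14253 ∈ S₅`, in 0-based form `0, 3, 1, 4, 2`. -/
def w14253 : Equiv.Perm (Fin 5) :=
  ⟨![0, 3, 1, 4, 2], ![0, 2, 4, 1, 3], by decide, by decide⟩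


/-!
Running the divided-difference recursion down from `w₀ = 54321` gives
`G_{14253} = e s² + x₀x₁(s - e)`, where `s = 1 - (1 - x₀)(1 - x₁)` and `e = 1 - (1 - x₂)(1 - x₃)`
(variables are 0-based: coordinate `i` of `ℝ⁵` stands for the element `i + 1` of `[5]`).
All its exponents have `α₀ ≤ 2` and `α₂ ≤ 1`, and its degree-4 part contains `(0,2,1,1,0)` and
`(2,2,0,0,0)`.

Suppose the Newton polytope `Q` of the degree-4 part were `∑_{j<k} P(SM₅(Iⱼ))`. Coordinate sums
give `∑ⱼ #Iⱼ = 4`. As `(2,2,0,0,0) ∈ Q` carries all of this mass on two coordinates, `#Iⱼ ≤ 2`;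
so each `SM₅(Iⱼ)` has a basis containing `1`, and `x₀ ≤ 2` on `Q` forces `k ≤ 2`, hence `k = 2`
and `#I₀ = #I₁ = 2`. In `(0,2,1,1,0) = p₀ + p₁` the `x₀`-coordinates of both `pⱼ` vanish, so
`1 ∉ Iⱼ` and `{1,3}` is a basis of both matroids; but then `2·𝟙_{1,3} ∈ Q` has `x₂ = 2 > 1`.
-/

open Equiv Finset

theorem Finset.sort_pair {α : Type*} [LinearOrder α] {a b : α} (h : a < b) :
    ({a, b} : Finset α).sort (· ≤ ·) = [a, b] := by
  rw [sort_insert (· ≤ ·) (fun x hx => (mem_singleton.1 hx).symm ▸ h.le)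
    (by simpa using h.ne), sort_singleton]

theorem Finset.getD_sort_zero {α : Type*} [LinearOrder α] {s : Finset α} (hs : s.Nonempty)
    (d : α) : (s.sort (· ≤ ·)).getD 0 d = s.min' hs := by
  rw [List.getD_eq_getElem _ _ (by simpa using hs.card_pos), sorted_zero_eq_min']

theorem Finset.exists_lt_and_eq_pair {α : Type*} [LinearOrder α] {s : Finset α}
    (h : s.card = 2) : ∃ a b, a < b ∧ s = {a, b} := by
  obtain ⟨a, b, hab, rfl⟩ := card_eq_two.1 h
  rcases hab.lt_or_gt with hab | hba
  · exact ⟨a, b, hab, rfl⟩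
  · exact ⟨b, a, hba, pair_comm a b⟩

theorem galeLE_singleton_iff {a c : ℕ} : galeLE {a} {c} ↔ a ≤ c := by
  simp [galeLE]

theorem galeLE_pair_iff {a b c d : ℕ} (hab : a < b) (hcd : c < d) :
    galeLE {a, b} {c, d} ↔ a ≤ c ∧ b ≤ d := by
  simp only [galeLE, card_pair hab.ne, card_pair hcd.ne, sort_pair hab, sort_pair hcd, true_and]
  refine ⟨fun h => ⟨h 0 two_pos, h 1 one_lt_two⟩, fun ⟨hac, hbd⟩ m hm => ?_⟩
  interval_cases m <;> assumption

theorem one_mem_of_galeLE {B I : Finset ℕ} (hB : ∀ b ∈ B, 1 ≤ b) (h : galeLE B I)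
    (hI : 1 ∈ I) : 1 ∈ B := by
  have hBne : B.Nonempty := card_pos.1 (h.1 ▸ card_pos.2 ⟨1, hI⟩)
  have hmin := h.2 0 hBne.card_pos
  rw [getD_sort_zero hBne, getD_sort_zero ⟨1, hI⟩] at hmin
  have : B.min' hBne = 1 :=
    le_antisymm (hmin.trans (min'_le I 1 hI)) (hB _ (min'_mem B hBne))
  exact this ▸ min'_mem B hBne

theorem exists_one_mem_galeLE_of_card_le_two {n : ℕ} {I : Finset ℕ} (hI : I.Nonempty)
    (hIn : I ⊆ Icc 1 n) (hle : I.card ≤ 2) : ∃ B ⊆ Icc 1 n, galeLE B I ∧ 1 ∈ B := by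
  obtain h1 | h2 : I.card = 1 ∨ I.card = 2 := by have := hI.card_pos; omega
  · obtain ⟨c, rfl⟩ := card_eq_one.1 h1
    have hc := mem_Icc.1 (hIn (mem_singleton_self c))
    exact ⟨{1}, singleton_subset_iff.2 (mem_Icc.2 ⟨le_rfl, by omega⟩),
      galeLE_singleton_iff.2 hc.1, mem_singleton_self 1⟩
  · obtain ⟨c, d, hcd, rfl⟩ := exists_lt_and_eq_pair h2
    have hc := mem_Icc.1 (hIn (by simp : c ∈ ({c, d} : Finset ℕ)))
    have hd := mem_Icc.1 (hIn (by simp : d ∈ ({c, d} : Finset ℕ)))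
    refine ⟨{1, 2}, ?_, (galeLE_pair_iff one_lt_two hcd).2 ⟨hc.1, by omega⟩, by simp⟩
    intro x hx
    simp only [mem_insert, mem_singleton] at hx
    rw [mem_Icc]
    omega

theorem galeLE_one_three_of_one_notMem {n : ℕ} {I : Finset ℕ} (hIn : I ⊆ Icc 1 n)
    (h2 : I.card = 2) (h1 : 1 ∉ I) : galeLE {1, 3} I := by
  obtain ⟨c, d, hcd, rfl⟩ := exists_lt_and_eq_pair h2
  have hc := mem_Icc.1 (hIn (by simp : c ∈ ({c, d} : Finset ℕ)))
  have hc1 : c ≠ 1 := fun h => h1 (by simp [h])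
  exact (galeLE_pair_iff (by norm_num) hcd).2 ⟨hc.1, by omega⟩

section SchubertPolytope

variable {n : ℕ} {I : Finset ℕ} {p : Fin n → ℝ}

def indicatorVec (n : ℕ) (B : Finset ℕ) : Fin n → ℝ := fun i => if (i : ℕ) + 1 ∈ B then 1 else 0

theorem sum_indicatorVec {B : Finset ℕ} (hB : B ⊆ Icc 1 n) :
    ∑ i, indicatorVec n B i = B.card := by
  simp only [indicatorVec]
  rw [Fin.sum_univ_eq_sum_range (fun k => if k + 1 ∈ B then (1 : ℝ) else 0), range_eq_Ico,
    sum_Ico_add' (fun k => if k ∈ B then (1 : ℝ) else 0), sum_boole, filter_mem_eq_inter,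
    zero_add, Ico_add_one_right_eq_Icc, inter_eq_right.2 hB]

theorem indicatorVec_mem_schubertPolytope {B : Finset ℕ} (hB : B ⊆ Icc 1 n)
    (hBI : galeLE B I) : indicatorVec n B ∈ schubertPolytope n I :=
  subset_convexHull ℝ _ ⟨B, hB, hBI, rfl⟩

theorem schubertPolytope_subset {H : Set (Fin n → ℝ)} (hH : Convex ℝ H)
    (h : ∀ B ⊆ Icc 1 n, galeLE B I → indicatorVec n B ∈ H) : schubertPolytope n I ⊆ H :=
  convexHull_min (by rintro _ ⟨B, hB, hBI, rfl⟩; exact h B hB hBI) hH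

theorem apply_nonneg_of_mem_schubertPolytope (hp : p ∈ schubertPolytope n I) (i : Fin n) :
    0 ≤ p i :=
  schubertPolytope_subset (convex_halfSpace_ge (LinearMap.proj i).isLinear 0)
    (fun B _ _ => by
      simp only [Set.mem_ofPred_eq, LinearMap.coe_proj, Function.eval, indicatorVec]
      positivity) hp

theorem apply_le_one_of_mem_schubertPolytope (hp : p ∈ schubertPolytope n I) (i : Fin n) :
    p i ≤ 1 :=
  schubertPolytope_subset (convex_halfSpace_le (LinearMap.proj i).isLinear 1)
    (fun B _ _ => by
      simp only [Set.mem_ofPred_eq, LinearMap.coe_proj, Function.eval, indicatorVec]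
      split_ifs <;> norm_num) hp

theorem sum_apply_of_mem_schubertPolytope (hp : p ∈ schubertPolytope n I) :
    ∑ i, p i = I.card :=
  schubertPolytope_subset (H := {x | ∑ i, x i = I.card})
    (convex_hyperplane ⟨fun x y => sum_add_distrib, fun c x => (mul_sum ..).symm⟩ _)
    (fun B hB hBI => by rw [Set.mem_ofPred_eq, sum_indicatorVec hB, hBI.1]) hp

theorem apply_zero_eq_one_of_mem_schubertPolytope [NeZero n] (hI : 1 ∈ I)
    (hp : p ∈ schubertPolytope n I) : p 0 = 1 :=
  schubertPolytope_subset (H := {x | x 0 = 1}) (convex_hyperplane (LinearMap.proj 0).isLinear 1)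
    (fun B hB hBI => by
      have h1B := one_mem_of_galeLE (fun b hb => (mem_Icc.1 (hB hb)).1) hBI hI
      simp [indicatorVec, h1B]) hp

end SchubertPolytope

section MinkowskiSum

variable {n k : ℕ} {I : Fin k → Finset ℕ} {p : Fin k → Fin n → ℝ}

theorem sum_apply_sum_of_mem_schubertPolytope (hp : ∀ j, p j ∈ schubertPolytope n (I j)) :
    ∑ i, (∑ j, p j) i = ∑ j, ((I j).card : ℝ) := by
  simp only [Finset.sum_apply]
  rw [sum_comm]
  exact sum_congr rfl fun j _ => sum_apply_of_mem_schubertPolytope (hp j)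

theorem card_le_of_sum_apply_eq (hp : ∀ j, p j ∈ schubertPolytope n (I j))
    (A : Finset (Fin n)) (hA : ∑ i ∈ A, (∑ j, p j) i = ∑ j, ((I j).card : ℝ)) (j : Fin k) :
    (I j).card ≤ A.card := by
  have hle : ∀ j, ∑ i ∈ A, p j i ≤ (I j).card := fun j =>
    (sum_apply_of_mem_schubertPolytope (hp j)) ▸
      sum_le_sum_of_subset_of_nonneg (subset_univ A)
        fun i _ _ => apply_nonneg_of_mem_schubertPolytope (hp j) i
  simp only [Finset.sum_apply] at hA
  rw [sum_comm] at hA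
  have heq := (sum_eq_sum_iff_of_le fun j _ => hle j).1 hA j (mem_univ j)
  have : ∑ i ∈ A, p j i ≤ A.card := by
    simpa using sum_le_sum fun i (_ : i ∈ A) => apply_le_one_of_mem_schubertPolytope (hp j) i
  exact_mod_cast heq ▸ this

end MinkowskiSum

theorem not_isSchubitope_of_mem_of_forall_le {P : Set (Fin 5 → ℝ)}
    (h4 : ![0, 2, 1, 1, 0] ∈ P) (h8 : ![2, 2, 0, 0, 0] ∈ P)
    (h0 : ∀ x ∈ P, x 0 ≤ 2) (h2 : ∀ x ∈ P, x 2 ≤ 1) : ¬IsSchubitope 5 P := by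
  rintro ⟨k, I, hI, rfl⟩
  obtain ⟨p, hp, hp4⟩ := h4
  obtain ⟨q, hq, hq8⟩ := h8
  have hsum : ∑ j, ((I j).card : ℝ) = 4 := by
    rw [← sum_apply_sum_of_mem_schubertPolytope hp, ← hp4, Fin.sum_univ_five]
    simp only [Matrix.cons_val]
    norm_num
  have hle : ∀ j, (I j).card ≤ 2 :=
    card_le_of_sum_apply_eq hq {0, 1} (by rw [hsum, ← hq8]; norm_num)
  have hk : k ≤ 2 := by
    choose B hB hBI h1B using fun j =>
      exists_one_mem_galeLE_of_card_le_two (hI j).1 (hI j).2 (hle j)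
    have := h0 _ ⟨_, fun j => indicatorVec_mem_schubertPolytope (hB j) (hBI j), rfl⟩
    simpa [indicatorVec, h1B] using this
  have hsum_nat : ∑ j, (I j).card = 4 := by exact_mod_cast hsum
  have h2k : 4 ≤ 2 * k := by
    simpa [← hsum_nat, mul_comm] using sum_le_sum fun j (_ : j ∈ univ) => hle j
  have hcard : ∀ j, (I j).card = 2 := fun j =>
    (sum_eq_sum_iff_of_le fun j _ => hle j).1
      (by rw [sum_const, card_univ, Fintype.card_fin, smul_eq_mul]; omega) j (mem_univ j)
  have h13 : ∀ j, galeLE {1, 3} (I j) := by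
    refine fun j => galeLE_one_three_of_one_notMem (hI j).2 (hcard j) fun h1 => ?_
    have hp0 : p j 0 ≤ ∑ j, p j 0 :=
      single_le_sum (fun j _ => apply_nonneg_of_mem_schubertPolytope (hp j) 0) (mem_univ j)
    rw [apply_zero_eq_one_of_mem_schubertPolytope h1 (hp j), ← Finset.sum_apply, ← hp4] at hp0
    norm_num at hp0
  have : k ≤ 1 := by
    simpa [indicatorVec] using
      h2 _ ⟨_, fun j => indicatorVec_mem_schubertPolytope (by decide) (h13 j), rfl⟩
  omega

section NewtonPolytope

variable {n : ℕ} {R : Type*} [CommSemiring R]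

def newtonPolytope (f : MvPolynomial (Fin n) R) : Set (Fin n → ℝ) :=
  convexHull ℝ {v | ∃ α ∈ f.support, v = fun i => (α i : ℝ)}

theorem mem_newtonPolytope_of_mem_support {f : MvPolynomial (Fin n) R} {α : Fin n →₀ ℕ}
    (hα : α ∈ f.support) : (fun i => (α i : ℝ)) ∈ newtonPolytope f :=
  subset_convexHull ℝ _ ⟨α, hα, rfl⟩

theorem apply_le_of_mem_newtonPolytope {f : MvPolynomial (Fin n) R} {i : Fin n} {d : ℕ}
    (h : ∀ α ∈ f.support, α i ≤ d) {x : Fin n → ℝ} (hx : x ∈ newtonPolytope f) : x i ≤ d := by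
  have hsub : newtonPolytope f ⊆ {x : Fin n → ℝ | x i ≤ d} :=
    convexHull_min (by rintro _ ⟨α, hα, rfl⟩; exact (Nat.cast_le (α := ℝ)).2 (h α hα))
      (convex_halfSpace_le (LinearMap.proj i).isLinear _)
  exact hsub hx

end NewtonPolytope

namespace MvPolynomial

variable {σ R : Type*} [CommSemiring R]

theorem mem_support_homogeneousComponent {f : MvPolynomial σ R} {m : ℕ} {α : σ →₀ ℕ} :
    α ∈ (homogeneousComponent m f).support ↔ α.degree = m ∧ α ∈ f.support := by
  simp only [mem_support_iff, coeff_homogeneousComponent]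
  split_ifs with h <;> simp [h]

variable [Fintype σ]

theorem monomial_equivFunOnFinite_symm (f : σ → ℕ) (c : R) :
    monomial (Finsupp.equivFunOnFinite.symm f) c = C c * ∏ i, X i ^ f i := by
  rw [monomial_eq, Finsupp.prod_fintype _ _ fun _ => pow_zero _]
  rfl

noncomputable def ofTerms (l : List ((σ → ℕ) × R)) : MvPolynomial σ R :=
  (l.map fun t => monomial (Finsupp.equivFunOnFinite.symm t.1) t.2).sum

theorem exists_of_mem_support_ofTerms {l : List ((σ → ℕ) × R)} {α : σ →₀ ℕ}
    (hα : α ∈ (ofTerms l).support) : ∃ t ∈ l, ⇑α = t.1 := by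
  classical
  induction l with
  | nil => simp [ofTerms] at hα
  | cons t l ih =>
    rw [ofTerms, List.map_cons, List.sum_cons] at hα
    rcases mem_union.1 (support_add hα) with h | h
    · exact ⟨t, List.mem_cons_self, by rw [mem_singleton.1 (support_monomial_subset h)]; rfl⟩
    · obtain ⟨t', ht', hαt'⟩ := ih h
      exact ⟨t', List.mem_cons_of_mem t ht', hαt'⟩

end MvPolynomial

theorem IsGrothendieck.eq_of_ascent {n : ℕ} {G : Perm (Fin n) → MvPolynomial (Fin n) ℤ}
    (hG : IsGrothendieck n G) {w u : Perm (Fin n)} {j j' : Fin n} (hj : (j : ℕ) + 1 = j')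
    (hw : w j < w j') (hu : w * swap j j' = u) {P Q : MvPolynomial (Fin n) ℤ} (hQ : G u = Q)
    (hP : (X j - X j') * P = (1 - X j') * Q - rename (swap j j') ((1 - X j') * Q)) :
    G w = P := by
  have hX : (X j - X j' : MvPolynomial (Fin n) ℤ) ≠ 0 :=
    sub_ne_zero.2 fun h => by have := congrArg Fin.val (X_injective h); omega
  subst hu hQ
  exact mul_left_cancel₀ hX ((hG.2 w j j' hj hw).trans hP.symm)

def w45321 : Perm (Fin 5) := ⟨![3, 4, 2, 1, 0], ![4, 3, 2, 0, 1], by decide, by decide⟩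
def w45231 : Perm (Fin 5) := ⟨![3, 4, 1, 2, 0], ![4, 2, 3, 0, 1], by decide, by decide⟩
def w45213 : Perm (Fin 5) := ⟨![3, 4, 1, 0, 2], ![3, 2, 4, 0, 1], by decide, by decide⟩
def w45123 : Perm (Fin 5) := ⟨![3, 4, 0, 1, 2], ![2, 3, 4, 0, 1], by decide, by decide⟩
def w41523 : Perm (Fin 5) := ⟨![3, 0, 4, 1, 2], ![1, 3, 4, 0, 2], by decide, by decide⟩
def w41253 : Perm (Fin 5) := ⟨![3, 0, 1, 4, 2], ![1, 2, 4, 0, 3], by decide, by decide⟩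

def grothendieck14253Terms : List ((Fin 5 → ℕ) × ℤ) :=
  [(![2, 2, 1, 1, 0], -1), (![2, 2, 1, 0, 0], 1), (![2, 2, 0, 1, 0], 1), (![2, 2, 0, 0, 0], -1),
   (![2, 1, 1, 1, 0], 2), (![2, 1, 1, 0, 0], -2), (![2, 1, 0, 1, 0], -2), (![2, 1, 0, 0, 0], 1),
   (![2, 0, 1, 1, 0], -1), (![2, 0, 1, 0, 0], 1), (![2, 0, 0, 1, 0], 1),
   (![1, 2, 1, 1, 0], 2), (![1, 2, 1, 0, 0], -2), (![1, 2, 0, 1, 0], -2), (![1, 2, 0, 0, 0], 1),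
   (![1, 1, 1, 1, 0], -1), (![1, 1, 1, 0, 0], 1), (![1, 1, 0, 1, 0], 1),
   (![0, 2, 1, 1, 0], -1), (![0, 2, 1, 0, 0], 1), (![0, 2, 0, 1, 0], 1)]

section Grothendieck14253

variable {G : Perm (Fin 5) → MvPolynomial (Fin 5) ℤ} (hG : IsGrothendieck 5 G)
include hG

theorem IsGrothendieck.apply_w14253 :
    G w14253 = (1 - (1 - X 2) * (1 - X 3)) * (1 - (1 - X 0) * (1 - X 1)) ^ 2 +
      X 0 * X 1 * ((1 - X 2) * (1 - X 3) - (1 - X 0) * (1 - X 1)) := by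
  have h54321 : G Fin.revPerm = X 0 ^ 4 * X 1 ^ 3 * X 2 ^ 2 * X 3 := by
    rw [hG.1, Fin.prod_univ_five]; simp
  have h45321 : G w45321 = X 0 ^ 3 * X 1 ^ 3 * X 2 ^ 2 * X 3 :=
    hG.eq_of_ascent (j := 0) (j' := 1) rfl (by decide) (by decide) h54321 ?_
  have h45231 : G w45231 = X 0 ^ 3 * X 1 ^ 3 * X 2 * X 3 :=
    hG.eq_of_ascent (j := 2) (j' := 3) rfl (by decide) (by decide) h45321 ?_
  have h45213 : G w45213 = X 0 ^ 3 * X 1 ^ 3 * X 2 :=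
    hG.eq_of_ascent (j := 3) (j' := 4) rfl (by decide) (by decide) h45231 ?_
  have h45123 : G w45123 = X 0 ^ 3 * X 1 ^ 3 :=
    hG.eq_of_ascent (j := 2) (j' := 3) rfl (by decide) (by decide) h45213 ?_
  have h41523 : G w41523 =
      X 0 ^ 3 * (X 1 ^ 2 + X 1 * X 2 + X 2 ^ 2 - X 1 ^ 2 * X 2 - X 1 * X 2 ^ 2) :=
    hG.eq_of_ascent (j := 1) (j' := 2) rfl (by decide) (by decide) h45123 ?_
  have h41253 : G w41253 = X 0 ^ 3 * (1 - (1 - X 1) * (1 - X 2) * (1 - X 3)) :=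
    hG.eq_of_ascent (j := 2) (j' := 3) rfl (by decide) (by decide) h41523 ?_
  refine hG.eq_of_ascent (j := 0) (j' := 1) rfl (by decide) (by decide) h41253 ?_
  -- the seven divided-difference identities
  all_goals
    simp only [map_sub, map_mul, map_add, map_one, map_pow, rename_X, swap_apply_def,
      Fin.reduceEq, reduceIte]
    ring

theorem IsGrothendieck.apply_w14253_eq_ofTerms : G w14253 = ofTerms grothendieck14253Terms := by
  rw [hG.apply_w14253]
  simp only [ofTerms, grothendieck14253Terms, List.map_cons, List.map_nil, List.sum_cons,
    List.sum_nil, monomial_equivFunOnFinite_symm, Fin.prod_univ_five, map_neg, map_one, map_ofNat,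
    Matrix.cons_val_zero, Matrix.cons_val_one, Matrix.cons_val, pow_zero, pow_one]
  ring

theorem IsGrothendieck.apply_le_of_mem_support_w14253 {α : Fin 5 →₀ ℕ}
    (hα : α ∈ (G w14253).support) : α 0 ≤ 2 ∧ α 2 ≤ 1 := by
  rw [hG.apply_w14253_eq_ofTerms] at hα
  obtain ⟨t, ht, hαt⟩ := exists_of_mem_support_ofTerms hα
  have hterms : ∀ t ∈ grothendieck14253Terms, t.1 0 ≤ 2 ∧ t.1 2 ≤ 1 := by decide
  exact hαt ▸ hterms t ht

theorem IsGrothendieck.mem_support_homogeneousComponent_four_w14253 :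
    Finsupp.equivFunOnFinite.symm ![0, 2, 1, 1, 0] ∈ (homogeneousComponent 4 (G w14253)).support ∧
      Finsupp.equivFunOnFinite.symm ![2, 2, 0, 0, 0] ∈
        (homogeneousComponent 4 (G w14253)).support := by
  rw [mem_support_homogeneousComponent, mem_support_homogeneousComponent,
    hG.apply_w14253_eq_ofTerms]
  simp [ofTerms, grothendieck14253Terms, coeff_monomial, Finsupp.degree_eq_sum, Fin.sum_univ_five]

end Grothendieck14253

theorem stmt_19 (G : Equiv.Perm (Fin 5) → MvPolynomial (Fin 5) ℤ)
    (hG : IsGrothendieck 5 G) :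
    ¬IsSchubitope 5 (convexHull ℝ
      {v : Fin 5 → ℝ | ∃ α ∈ (homogeneousComponent 4 (G w14253)).support,
        v = fun i : Fin 5 => (α i : ℝ)}) := by
  show ¬IsSchubitope 5 (newtonPolytope (homogeneousComponent 4 (G w14253)))
  have hsupp : ∀ α ∈ (homogeneousComponent 4 (G w14253)).support, α 0 ≤ 2 ∧ α 2 ≤ 1 :=
    fun α hα => hG.apply_le_of_mem_support_w14253 (mem_support_homogeneousComponent.1 hα).2
  obtain ⟨h4, h8⟩ := hG.mem_support_homogeneousComponent_four_w14253
  refine not_isSchubitope_of_mem_of_forall_le ?_ ?_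
    (fun x hx => apply_le_of_mem_newtonPolytope (fun α hα => (hsupp α hα).1) hx)
    (fun x hx => by exact_mod_cast apply_le_of_mem_newtonPolytope (fun α hα => (hsupp α hα).2) hx)
  · convert mem_newtonPolytope_of_mem_support h4 using 1
    funext i; fin_cases i <;> simp
  · convert mem_newtonPolytope_of_mem_support h8 using 1
    funext i; fin_cases i <;> simp
end
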